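/- arXiv:0804.1760 — 5 statements merged into one kernel-verified Lean document; each statement's English description precedes it below -/
import Mathlib

section
/- The symmetric maximum ⊻ is associative on any triple a, b, c ∈ L such that the supremum of {a,b,c} is not the reflection of the infimum of {a,b,c}, i.e., (a ⊻ b) ⊻ c = a ⊻ (b ⊻ c) whenever a ∨ b ∨ c ≠ -(a ∧ b ∧ c). -/
variable {L : Type*}

/-- Absolute value on a symmetric linearly ordered set with reflection `neg`. -/
def sabs [LinearOrder L] (neg : L → L) (a : L) : L := a ⊔ neg a

/-- The symmetric maximum. -/
def symmax [LinearOrder L] (neg : L → L) (zero : L) (a b : L) : L :=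
  if b = neg a then zero
  else if sabs neg a ⊔ sabs neg b = neg a ∨ sabs neg a ⊔ sabs neg b = neg b then
    neg (sabs neg a ⊔ sabs neg b)
  else sabs neg a ⊔ sabs neg b

/-- The sign function, valued in {-1, 0, 1}. -/
def sgn [LinearOrder L] (zero a : L) : ℤ :=
  if a < zero then -1 else if a = zero then 0 else 1

/-- The symmetric minimum. -/
def symmin [LinearOrder L] (neg : L → L) (zero : L) (a b : L) : L :=
  if sgn zero a ≠ sgn zero b then neg (sabs neg a ⊓ sabs neg b)
  else sabs neg a ⊓ sabs neg b

set_option linter.unusedSectionVars false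

section Aux
variable [LinearOrder L] {neg : L → L} {zero : L}
variable (hinv : ∀ a, neg (neg a) = a) (hanti : ∀ a b, a ≤ b → neg b ≤ neg a)
  (hzero : neg zero = zero)

include hinv hanti hzero

lemma aux_neg_inj : Function.Injective neg := fun a b h => by
  rw [← hinv a, h, hinv]

lemma aux_neg_inf (a b : L) : neg (a ⊓ b) = neg a ⊔ neg b := by
  rcases le_total a b with h | h
  · rw [inf_eq_left.2 h, sup_eq_left.2 (hanti _ _ h)]
  · rw [inf_eq_right.2 h, sup_eq_right.2 (hanti _ _ h)]

lemma aux_sabs_neg (a : L) : sabs neg (neg a) = sabs neg a := by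
  simp [sabs, hinv, sup_comm]

lemma aux_sabs_nonneg (a : L) : zero ≤ sabs neg a := by
  rcases le_total a zero with h | h
  · exact le_trans (hzero ▸ hanti _ _ h) le_sup_right
  · exact le_trans h le_sup_left

lemma aux_sabs_cases (a : L) : sabs neg a = a ∨ sabs neg a = neg a := by
  rcases le_total a (neg a) with h | h
  · exact Or.inr (sup_eq_right.2 h)
  · exact Or.inl (sup_eq_left.2 h)

lemma aux_sabs_eq_zero {a : L} (h : sabs neg a = zero) : a = zero := by
  have h1 : a ≤ zero := h ▸ le_sup_left
  have h2 : neg a ≤ zero := h ▸ le_sup_right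
  have h3 : zero ≤ a := by
    have := hanti _ _ h2; rwa [hinv, hzero] at this
  exact le_antisymm h1 h3

lemma aux_sabs_eq_cases {a b : L} (h : sabs neg a = sabs neg b) :
    a = b ∨ b = neg a := by
  rcases aux_sabs_cases hinv hanti hzero (neg := neg) a with ha | ha <;>
    rcases aux_sabs_cases hinv hanti hzero (neg := neg) b with hb | hb
  · exact Or.inl (ha ▸ hb ▸ h)
  · right; rw [← hinv b, ← hb, ← h, ha]
  · exact Or.inr (by rw [← hb, ← h, ha])
  · left; exact aux_neg_inj hinv hanti hzero (by rw [← ha, ← hb, h])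

lemma aux_symmax_right {a b : L} (h : sabs neg a < sabs neg b) :
    symmax neg zero a b = b := by
  have hne : b ≠ neg a := by
    intro e; rw [e, aux_sabs_neg hinv hanti hzero] at h; exact lt_irrefl _ h
  have hm : sabs neg a ⊔ sabs neg b = sabs neg b := sup_eq_right.2 h.le
  have hna : sabs neg b ≠ neg a := by
    intro e; exact absurd (lt_of_le_of_lt le_sup_right h) (e ▸ lt_irrefl _)
  rw [symmax, if_neg hne, hm]
  by_cases hb : sabs neg b = neg b
  · rw [if_pos (Or.inr hb), hb, hinv]
  · rw [if_neg (by rintro (e | e); exacts [hna e, hb e])]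
    rcases aux_sabs_cases hinv hanti hzero (neg := neg) b with hb' | hb'
    · exact hb'
    · exact absurd hb' hb

lemma aux_symmax_left {a b : L} (h : sabs neg b < sabs neg a) :
    symmax neg zero a b = a := by
  have hne : b ≠ neg a := by
    intro e; rw [e, aux_sabs_neg hinv hanti hzero] at h; exact lt_irrefl _ h
  have hm : sabs neg a ⊔ sabs neg b = sabs neg a := sup_eq_left.2 h.le
  have hnb : sabs neg a ≠ neg b := by
    intro e; exact absurd (lt_of_le_of_lt le_sup_right h) (e ▸ lt_irrefl _)
  rw [symmax, if_neg hne, hm]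
  by_cases ha : sabs neg a = neg a
  · rw [if_pos (Or.inl ha), ha, hinv]
  · rw [if_neg (by rintro (e | e); exacts [ha e, hnb e])]
    rcases aux_sabs_cases hinv hanti hzero (neg := neg) a with ha' | ha'
    · exact ha'
    · exact absurd ha' ha

lemma aux_neg_fixed_eq_zero {a : L} (h : a = neg a) : a = zero := by
  rcases lt_trichotomy a zero with hl | hl | hl
  · have := hanti _ _ hl.le
    rw [hzero, ← h] at this
    exact absurd hl (not_lt.2 this)
  · exact hl
  · have := hanti _ _ hl.le
    rw [hzero, ← h] at this
    exact absurd hl (not_lt.2 this)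

lemma aux_symmax_self (a : L) : symmax neg zero a a = a := by
  by_cases hfix : a = neg a
  · rw [symmax, if_pos hfix]
    exact (aux_neg_fixed_eq_zero hinv hanti hzero hfix).symm
  · rw [symmax, if_neg hfix, sup_idem]
    by_cases ha : sabs neg a = neg a
    · rw [if_pos (Or.inl ha), ha, hinv]
    · rw [if_neg (by rintro (e | e) <;> exact ha e)]
      rcases aux_sabs_cases hinv hanti hzero (neg := neg) a with ha' | ha'
      · exact ha'
      · exact absurd ha' ha

lemma aux_symmax_neg_self (a : L) : symmax neg zero a (neg a) = zero := by
  simp [symmax]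

lemma aux_symmax_zero_left (c : L) : symmax neg zero zero c = c := by
  by_cases hc : c = zero
  · rw [symmax, if_pos (by rw [hc, hzero]), hc]
  · have hne : c ≠ neg zero := by rw [hzero]; exact hc
    have hsz : sabs neg zero = zero := by rw [sabs, hzero, sup_idem]
    have hm : sabs neg zero ⊔ sabs neg c = sabs neg c := by
      rw [hsz]; exact sup_eq_right.2 (aux_sabs_nonneg hinv hanti hzero c)
    have hnz : sabs neg c ≠ neg zero := by
      rw [hzero]; intro e; exact hc (aux_sabs_eq_zero hinv hanti hzero e)
    rw [symmax, if_neg hne, hm]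
    by_cases hcc : sabs neg c = neg c
    · rw [if_pos (Or.inr hcc), hcc, hinv]
    · rw [if_neg (by rintro (e | e); exacts [hnz e, hcc e])]
      rcases aux_sabs_cases hinv hanti hzero (neg := neg) c with hc' | hc'
      · exact hc'
      · exact absurd hc' hcc

lemma aux_symmax_zero_right (a : L) : symmax neg zero a zero = a := by
  by_cases ha : a = zero
  · rw [symmax, if_pos (by rw [ha, hzero]), ha]
  · have hne : zero ≠ neg a := by
      intro e
      exact ha (by rw [← hinv a, ← e, hzero])
    have hsz : sabs neg zero = zero := by rw [sabs, hzero, sup_idem]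
    have hm : sabs neg a ⊔ sabs neg zero = sabs neg a := by
      rw [hsz]; exact sup_eq_left.2 (aux_sabs_nonneg hinv hanti hzero a)
    have hnz : sabs neg a ≠ neg zero := by
      rw [hzero]; intro e; exact ha (aux_sabs_eq_zero hinv hanti hzero e)
    rw [symmax, if_neg hne, hm]
    by_cases haa : sabs neg a = neg a
    · rw [if_pos (Or.inl haa), haa, hinv]
    · rw [if_neg (by rintro (e | e); exacts [haa e, hnz e])]
      rcases aux_sabs_cases hinv hanti hzero (neg := neg) a with ha' | ha'
      · exact ha'
      · exact absurd ha' haa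

lemma aux_key {x y : L} (h : sabs neg y ≤ sabs neg x) :
    x ⊔ neg x ⊔ y = neg (x ⊓ neg x ⊓ y) := by
  have h1 : x ⊔ neg x ⊔ y = sabs neg x := sup_eq_left.2 (le_trans le_sup_left h)
  have h2 : neg (x ⊓ neg x ⊓ y) = neg x ⊔ x ⊔ neg y := by
    rw [aux_neg_inf hinv hanti hzero, aux_neg_inf hinv hanti hzero, hinv]
  rw [h1, h2, sup_comm (neg x) x]
  exact (sup_eq_left.2 (le_trans le_sup_right h)).symm

end Aux

/-- the symmetric maximum is associative on any triple whose
supremum is not the reflection of its infimum. -/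
theorem symmax_assoc_of_ne [LinearOrder L] (neg : L → L) (zero : L)
    (hinv : ∀ a, neg (neg a) = a)
    (hanti : ∀ a b, a ≤ b → neg b ≤ neg a)
    (hzero : neg zero = zero) :
    ∀ a b c : L, a ⊔ b ⊔ c ≠ neg (a ⊓ b ⊓ c) →
      symmax neg zero (symmax neg zero a b) c = symmax neg zero a (symmax neg zero b c) := by
  intro a b c h
  rcases lt_trichotomy (sabs neg a) (sabs neg b) with hab | hab | hab
  · -- |a| < |b|
    rw [aux_symmax_right hinv hanti hzero hab]
    rcases lt_trichotomy (sabs neg b) (sabs neg c) with hbc | hbc | hbc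
    · rw [aux_symmax_right hinv hanti hzero hbc,
        aux_symmax_right hinv hanti hzero (hab.trans hbc)]
    · rcases aux_sabs_eq_cases hinv hanti hzero hbc with hcb | hcb
      · subst hcb
        rw [aux_symmax_self hinv hanti hzero, aux_symmax_right hinv hanti hzero hab]
      · exfalso; apply h; subst hcb
        have e1 : a ⊔ b ⊔ neg b = b ⊔ neg b ⊔ a := by
          rw [sup_comm a b, sup_right_comm]
        have e2 : a ⊓ b ⊓ neg b = b ⊓ neg b ⊓ a := by
          rw [inf_comm a b, inf_right_comm]
        rw [e1, e2]
        exact aux_key hinv hanti hzero hab.le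
    · rw [aux_symmax_left hinv hanti hzero hbc, aux_symmax_right hinv hanti hzero hab]
  · -- |a| = |b|
    rcases aux_sabs_eq_cases hinv hanti hzero hab with hba | hba
    · subst hba
      rw [aux_symmax_self hinv hanti hzero]
      rcases lt_trichotomy (sabs neg a) (sabs neg c) with hac | hac | hac
      · rw [aux_symmax_right hinv hanti hzero hac, aux_symmax_right hinv hanti hzero hac]
      · rcases aux_sabs_eq_cases hinv hanti hzero hac with hca | hca
        · subst hca
          rw [aux_symmax_self hinv hanti hzero, aux_symmax_self hinv hanti hzero]
        · exfalso; apply h; subst hca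
          have e1 : a ⊔ a ⊔ neg a = a ⊔ neg a ⊔ a := by
            rw [sup_idem, sup_right_comm, sup_idem]
          have e2 : a ⊓ a ⊓ neg a = a ⊓ neg a ⊓ a := by
            rw [inf_idem, inf_right_comm, inf_idem]
          rw [e1, e2]
          exact aux_key hinv hanti hzero le_rfl
      · rw [aux_symmax_left hinv hanti hzero hac, aux_symmax_self hinv hanti hzero]
    · subst hba
      rw [aux_symmax_neg_self hinv hanti hzero, aux_symmax_zero_left hinv hanti hzero]
      rcases lt_trichotomy (sabs neg a) (sabs neg c) with hac | hac | hac
      · rw [aux_symmax_right hinv hanti hzero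
          (show sabs neg (neg a) < sabs neg c by rwa [aux_sabs_neg hinv hanti hzero]),
          aux_symmax_right hinv hanti hzero hac]
      · rcases aux_sabs_eq_cases hinv hanti hzero hac with hca | hca
        · subst hca
          exact absurd (aux_key hinv hanti hzero le_rfl) h
        · subst hca
          exact absurd
            (aux_key hinv hanti hzero (le_of_eq (aux_sabs_neg hinv hanti hzero a))) h
      · exact absurd (aux_key hinv hanti hzero hac.le) h
  · -- |b| < |a|
    rw [aux_symmax_left hinv hanti hzero hab]
    rcases lt_trichotomy (sabs neg b) (sabs neg c) with hbc | hbc | hbc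
    · rw [aux_symmax_right hinv hanti hzero hbc]
    · rcases aux_sabs_eq_cases hinv hanti hzero hbc with hcb | hcb
      · subst hcb
        rw [aux_symmax_self hinv hanti hzero]
      · subst hcb
        rw [aux_symmax_neg_self hinv hanti hzero, aux_symmax_zero_right hinv hanti hzero,
          aux_symmax_left hinv hanti hzero
            (show sabs neg (neg b) < sabs neg a by rwa [aux_sabs_neg hinv hanti hzero])]
    · rw [aux_symmax_left hinv hanti hzero hbc, aux_symmax_left hinv hanti hzero hab,
        aux_symmax_left hinv hanti hzero (hbc.trans hab)]
end

section
/- For a fuzzy measure v on a finite set N, the lower ordinal Möbius transform m_*(A) := v(A) if v(A) > v(B) for all B ⊊ A with |A\B| = 1, and 0 otherwise, also satisfies the decomposition v(A) = sup over B ⊆ A of m_*(B) for all A ⊆ N. -/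
/-- The lower ordinal Möbius transform of a set function. -/
def mstar {N : Type*} [Fintype N] [DecidableEq N] {L : Type*} [LinearOrder L] [OrderBot L]
    (v : Finset N → L) (A : Finset N) : L :=
  if ∀ B : Finset N, B ⊆ A → (A \ B).card = 1 → v B < v A then v A else ⊥

/-- the lower ordinal Möbius transform also satisfies the
decomposition v(A) = sup_{B ⊆ A} m_*(B). -/
theorem fuzzyMeasure_eq_sup_mstar
    {N : Type*} [Fintype N] [DecidableEq N]
    {L : Type*} [LinearOrder L] [BoundedOrder L]
    (v : Finset N → L)
    (hempty : v ∅ = ⊥) (hfull : v Finset.univ = ⊤)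
    (hmono : ∀ A B : Finset N, A ⊆ B → v A ≤ v B) :
    ∀ A : Finset N, v A = A.powerset.sup (mstar v) := by
  intro A
  apply le_antisymm
  · induction A using Finset.strongInduction with
    | _ A ih =>
      by_cases h : ∀ B : Finset N, B ⊆ A → (A \ B).card = 1 → v B < v A
      · have : mstar v A = v A := if_pos h
        calc v A = mstar v A := this.symm
          _ ≤ A.powerset.sup (mstar v) :=
            Finset.le_sup (Finset.mem_powerset.mpr le_rfl)
      · push_neg at h
        obtain ⟨B, hBA, hcard, hle⟩ := h
        have hBssub : B ⊂ A := by
          refine Finset.ssubset_iff_of_subset hBA |>.mpr ?_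
          obtain ⟨x, hx⟩ := Finset.card_eq_one.mp hcard
          exact ⟨x, by
            have : x ∈ A \ B := hx ▸ Finset.mem_singleton_self x
            exact ⟨(Finset.mem_sdiff.mp this).1, (Finset.mem_sdiff.mp this).2⟩⟩
        have hvA : v A ≤ B.powerset.sup (mstar v) := le_trans hle (ih B hBssub)
        refine hvA.trans (Finset.sup_mono ?_)
        exact Finset.powerset_mono.mpr hBA
  · apply Finset.sup_le
    intro B hB
    have hBA : B ⊆ A := Finset.mem_powerset.mp hB
    unfold mstar
    split
    · exact hmono B A hBA
    · exact bot_le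
end

section
/- For a fuzzy measure v on a finite set N, any monotone-data nonnegative solution m : 𝒫(N) → L⁺ of the equation v(A) = sup_{B ⊆ A} m(B) for all A satisfies m_*(B) ≤ m(B) ≤ v(B) for all B ⊆ N, where m_*(B) = v(B) if v(B) > v(C) for every C obtained from B by removing one element, and m_*(B) = 0 otherwise. Conversely, every function m in the interval [m_*, m^*] with m^* = v is a solution. -/
/-- the nonnegative solutions m of v(A) = sup_{B ⊆ A} m(B) are
exactly the functions lying in the interval [m_*, m^*] with m^* = v. -/
theorem fuzzyMeasure_solutions_interval
    {N : Type*} [Fintype N] [DecidableEq N]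
    {L : Type*} [LinearOrder L] [BoundedOrder L]
    (v : Finset N → L)
    (hempty : v ∅ = ⊥) (hfull : v Finset.univ = ⊤)
    (hmono : ∀ A B : Finset N, A ⊆ B → v A ≤ v B) :
    (∀ m : Finset N → L, (∀ A : Finset N, v A = A.powerset.sup m) →
        ∀ B : Finset N, mstar v B ≤ m B ∧ m B ≤ v B) ∧
      (∀ m : Finset N → L, (∀ B : Finset N, mstar v B ≤ m B ∧ m B ≤ v B) →
        ∀ A : Finset N, v A = A.powerset.sup m) := by
  constructor
  · intro m hm B
    have hmB : m B ≤ v B := by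
      rw [hm B]; exact Finset.le_sup (Finset.mem_powerset_self B)
    refine ⟨?_, hmB⟩
    unfold mstar
    split_ifs with h
    · -- need v B ≤ m B
      obtain ⟨C, hC, hCeq⟩ := Finset.exists_mem_eq_sup B.powerset
        ⟨∅, Finset.empty_mem_powerset B⟩ m
      rw [Finset.mem_powerset] at hC
      by_cases hCB : C = B
      · rw [hCB] at hCeq
        rw [hm B, hCeq]
      · exfalso
        obtain ⟨x, hxB, hxC⟩ := Finset.exists_of_ssubset (hC.ssubset_of_ne hCB)
        have hD : C ⊆ B.erase x := Finset.subset_erase.mpr ⟨hC, hxC⟩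
        have hcard : (B \ B.erase x).card = 1 := by
          rw [Finset.sdiff_erase_self, Finset.card_singleton]
          exact hxB
        have hlt : v (B.erase x) < v B := h _ (Finset.erase_subset x B) hcard
        have : v B ≤ v (B.erase x) := by
          calc v B = m C := by rw [hm B, hCeq]
            _ ≤ (B.erase x).powerset.sup m := Finset.le_sup (Finset.mem_powerset.mpr hD)
            _ = v (B.erase x) := (hm _).symm
        exact absurd hlt (not_lt.mpr this)
    · exact bot_le
  · intro m hm A
    induction A using Finset.strongInduction with
    | _ A ih =>
      apply le_antisymm
      · by_cases h : ∀ B : Finset N, B ⊆ A → (A \ B).card = 1 → v B < v A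
        · have hms : mstar v A = v A := if_pos h
          calc v A = mstar v A := hms.symm
            _ ≤ m A := (hm A).1
            _ ≤ A.powerset.sup m := Finset.le_sup (Finset.mem_powerset_self A)
        · push_neg at h
          obtain ⟨B, hBA, hcard, hge⟩ := h
          have hne : (A \ B).Nonempty := by
            rw [← Finset.card_pos, hcard]; norm_num
          obtain ⟨x, hx⟩ := hne
          rw [Finset.mem_sdiff] at hx
          have hBA' : B ⊂ A :=
            lt_of_le_of_ne hBA (fun e => hx.2 (e ▸ hx.1))
          calc v A ≤ v B := hge
            _ ≤ B.powerset.sup m := le_of_eq (ih B hBA')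
            _ ≤ A.powerset.sup m := Finset.sup_mono (Finset.powerset_mono.mpr hBA)
      · apply Finset.sup_le
        intro B hB
        exact le_trans (hm B).2 (hmono B A (Finset.mem_powerset.mp hB))
end

section
/- Let Π be a possibility measure on N = {1,…,n} generated by a possibility distribution π with 0 < π(1) < ⋯ < π(n) = 1. Then its lower ordinal Möbius transform m_* vanishes except on singletons, where m_*({i}) = π(i). -/
/-- the lower ordinal Möbius transform of a possibility measure
generated by a strictly increasing positive possibility distribution vanishes
except on singletons, where it equals the possibility distribution. -/
theorem mstar_possibility
    {n : ℕ} {L : Type*} [LinearOrder L] [BoundedOrder L]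
    (P : Finset (Fin n) → L)
    (hempty : P ∅ = ⊥) (hfull : P Finset.univ = ⊤)
    (hmax : ∀ A B : Finset (Fin n), P (A ∪ B) = P A ⊔ P B)
    (hpos : ∀ i : Fin n, ⊥ < P {i})
    (hstrict : ∀ i j : Fin n, i < j → P {i} < P {j}) :
    (∀ i : Fin n, mstar P {i} = P {i}) ∧
      (∀ A : Finset (Fin n), (∀ i : Fin n, A ≠ {i}) → mstar P A = ⊥) := by
  -- P of a nonempty set is the sup of singletons
  have hsup : ∀ (A : Finset (Fin n)) (h : A.Nonempty),
      P A = A.sup' h (fun i => P {i}) := by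
    intro A
    induction A using Finset.induction_on with
    | empty => intro h; exact absurd rfl h.ne_empty
    | @insert a s ha ih =>
      intro h
      rcases s.eq_empty_or_nonempty with hs | hs
      · subst hs; simp
      · have h1 : P (insert a s) = P {a} ⊔ P s := by
          rw [← hmax]; rfl
        rw [h1, ih hs, Finset.sup'_insert]
  constructor
  · intro i
    have h1 : ∀ B : Finset (Fin n), B ⊆ ({i} : Finset (Fin n)) →
        (({i} : Finset (Fin n)) \ B).card = 1 → P B < P {i} := by
      intro B hB hc
      have : B = ∅ := by
        rcases Finset.subset_singleton_iff.mp hB with h | h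
        · exact h
        · subst h; simp at hc
      subst this
      rw [hempty]; exact hpos i
    simp [mstar, h1]
  · intro A hA
    rcases A.eq_empty_or_nonempty with h | h
    · subst h; simp [mstar, hempty]
    · -- A has at least 2 elements
      have hcard : 2 ≤ A.card := by
        rcases Nat.lt_or_ge A.card 2 with hc | hc
        · interval_cases h' : A.card
          · exact absurd (Finset.card_eq_zero.mp h') h.ne_empty
          · obtain ⟨i, hi⟩ := Finset.card_eq_one.mp h'
            exact absurd hi (hA i)
        · exact hc
      have hmin := A.min'_mem h
      have hmaxm := A.max'_mem h
      have hne : A.min' h ≠ A.max' h := by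
        have := A.min'_lt_max'_of_card (by omega)
        exact ne_of_lt this
      set B := A.erase (A.min' h) with hBdef
      have hBsub : B ⊆ A := Finset.erase_subset _ _
      have hmB : A.max' h ∈ B := Finset.mem_erase.mpr ⟨hne.symm, hmaxm⟩
      have hBne : B.Nonempty := ⟨_, hmB⟩
      have hcardB : (A \ B).card = 1 := by
        rw [hBdef, Finset.sdiff_erase_self hmin]; simp
      -- P A = P {max}
      have hPA : P A = P {A.max' h} := by
        rw [hsup A h]
        apply le_antisymm
        · apply Finset.sup'_le
          intro i hi
          rcases lt_or_eq_of_le (A.le_max' i hi) with hlt | heq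
          · exact le_of_lt (hstrict _ _ hlt)
          · rw [heq]
        · exact Finset.le_sup' (fun i => P {i}) hmaxm
      have hPB : P {A.max' h} ≤ P B := by
        rw [hsup B hBne]
        exact Finset.le_sup' (fun i => P {i}) hmB
      have : ¬ (P B < P A) := by rw [hPA]; exact not_lt.mpr hPB
      have hnot : ¬ ∀ C : Finset (Fin n), C ⊆ A → (A \ C).card = 1 → P C < P A := by
        intro hall
        exact this (hall B hBsub hcardB)
      simp [mstar, hnot]
end

section
/- For any L-valued function f on N with f_{(1)} ≤ ⋯ ≤ f_{(p)} < 0 ≤ f_{(p+1)} ≤ ⋯ ≤ f_{(n)}, the symmetric Sugeno integral admits the explicit form Š_v(f) = [⊻_{i=1}^p ( f_{(i)} ⊼ v({(1),…,(i)}) )] ⊻ [⊻_{i=p+1}^n ( f_{(i)} ⊼ v({(i),…,(n)}) )], where the first bracket combines only nonpositive terms and the second only nonnegative terms (so no associativity ambiguity arises). -/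
/-!
Š_v(f) is the symmetric maximum of S_v(f⁺) and −S_v(f⁻). If g is monotone along σ, the
max-min formula for S_v(g) over all subsets collapses to a maximum over the upper sets
{σ i, …, σ (n-1)}: a nonempty A whose least index is i has inf_A g = g (σ i) and lies in the
i-th upper set, where v is larger. The antitone f⁻ is the same statement for the reversed
order, with lower sets. The terms of f⁺ with i < p and of f⁻ with i ≥ p vanish. On arguments
of one sign ⊻ is the ordinary maximum (or minimum) and ⊼ is, up to sign, the ordinary
minimum, so the two folds of the statement evaluate to −S_v(f⁻) and S_v(f⁺).
-/

variable {L : Type*}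

/-- The Sugeno integral of `f` with respect to `v`, in max-min (Möbius) form. -/
def sugeno {n : ℕ} [LinearOrder L] [BoundedOrder L]
    (v : Finset (Fin n) → L) (f : Fin n → L) : L :=
  Finset.univ.powerset.sup fun A : Finset (Fin n) => A.inf f ⊓ v A

/-- The symmetric Sugeno integral Š_v(f) = S_v(f⁺) ⊻ (−S_v(f⁻)),
where f⁺ = f ∨ 0 and f⁻ = (−f) ∨ 0. -/
def symSugeno {n : ℕ} [LinearOrder L] [BoundedOrder L]
    (neg : L → L) (zero : L) (v : Finset (Fin n) → L) (f : Fin n → L) : L :=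
  symmax neg zero (sugeno v fun i => f i ⊔ zero) (neg (sugeno v fun i => neg (f i) ⊔ zero))

/-- Iterated symmetric maximum over a list of indices. -/
def symmaxFold [LinearOrder L] (neg : L → L) (zero : L) (l : List (L)) : L :=
  l.foldr (symmax neg zero) zero

open Finset

section SymmetricArithmetic

variable [LinearOrder L] {neg : L → L} {zero : L} {a b : L}

lemma sabs_of_nonneg (hanti : Antitone neg) (hzero : neg zero = zero) (ha : zero ≤ a) :
    sabs neg a = a :=
  sup_eq_left.mpr (((hanti ha).trans_eq hzero).trans ha)

lemma sabs_of_nonpos (hanti : Antitone neg) (hzero : neg zero = zero) (ha : a ≤ zero) :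
    sabs neg a = neg a :=
  sup_eq_right.mpr (ha.trans (hzero ▸ hanti ha))

lemma symmax_comm (hinv : Function.Involutive neg) (a b : L) :
    symmax neg zero a b = symmax neg zero b a := by
  have hswap : b = neg a ↔ a = neg b := ⟨fun h => by rw [h, hinv], fun h => by rw [h, hinv]⟩
  simp only [symmax, hswap, sup_comm (sabs neg a), or_comm]

lemma symmax_of_nonneg (hinv : Function.Involutive neg) (hanti : Antitone neg)
    (hzero : neg zero = zero) (ha : zero ≤ a) (hb : zero ≤ b) :
    symmax neg zero a b = a ⊔ b := by
  have hna : neg a ≤ zero := (hanti ha).trans_eq hzero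
  have hnb : neg b ≤ zero := (hanti hb).trans_eq hzero
  rw [symmax, sabs_of_nonneg hanti hzero ha, sabs_of_nonneg hanti hzero hb]
  split_ifs with hba hmax
  · have hb0 : b = zero := le_antisymm (hba ▸ hna) hb
    have ha0 : a = zero := by rw [← hinv a, ← hba, hb0, hzero]
    rw [ha0, hb0, sup_idem]
  · have hab : a ⊔ b ≤ zero := by rcases hmax with h | h <;> rw [h] <;> assumption
    have ha0 : a = zero := le_antisymm (le_sup_left.trans hab) ha
    have hb0 : b = zero := le_antisymm (le_sup_right.trans hab) hb
    exact absurd (by rw [ha0, hb0, hzero]) hba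
  · rfl

lemma symmax_of_nonpos (hinv : Function.Involutive neg) (hanti : Antitone neg)
    (hzero : neg zero = zero) (ha : a ≤ zero) (hb : b ≤ zero) :
    symmax neg zero a b = a ⊓ b := by
  rw [symmax, sabs_of_nonpos hanti hzero ha, sabs_of_nonpos hanti hzero hb]
  split_ifs with hba hmax
  · have hb0 : b = zero := le_antisymm hb (hba ▸ hzero ▸ hanti ha)
    have ha0 : a = zero := by rw [← hinv a, ← hba, hb0, hzero]
    rw [ha0, hb0, inf_idem]
  · rw [hanti.map_sup, hinv, hinv]
  · exact absurd (max_choice (neg a) (neg b)) hmax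

lemma symmin_of_nonneg (hanti : Antitone neg) (hzero : neg zero = zero)
    (ha : zero ≤ a) (hb : zero ≤ b) : symmin neg zero a b = a ⊓ b := by
  rw [symmin, sabs_of_nonneg hanti hzero ha, sabs_of_nonneg hanti hzero hb]
  split_ifs with hsgn
  · suffices a ⊓ b = zero by rw [this, hzero]
    simp only [sgn, not_lt.mpr ha, not_lt.mpr hb, if_false] at hsgn
    split_ifs at hsgn <;> simp_all
  · rfl

lemma symmin_of_neg_of_nonneg (hanti : Antitone neg) (hzero : neg zero = zero)
    (ha : a < zero) (hb : zero ≤ b) : symmin neg zero a b = neg (neg a ⊓ b) := by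
  have hsgn : sgn zero a ≠ sgn zero b := by
    simp only [sgn, if_pos ha, if_neg (not_lt.mpr hb)]
    split_ifs <;> decide
  rw [symmin, if_pos hsgn, sabs_of_nonpos hanti hzero ha.le, sabs_of_nonneg hanti hzero hb]

end SymmetricArithmetic

section Folds

variable [LinearOrder L] [OrderBot L] {neg : L → L} {zero : L} {ι : Type*} [DecidableEq ι]

lemma symmaxFold_map_of_nonneg (hinv : Function.Involutive neg) (hanti : Antitone neg)
    (hzero : neg zero = zero) (l : List ι) (t : ι → L) (ht : ∀ i ∈ l, zero ≤ t i) :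
    symmaxFold neg zero (l.map t) = l.toFinset.sup t ⊔ zero := by
  induction l with
  | nil => simp [symmaxFold]
  | cons a l ih =>
    have ih := ih fun i hi => ht i (List.mem_cons_of_mem a hi)
    change symmax neg zero (t a) (symmaxFold neg zero (l.map t)) = _
    rw [ih, symmax_of_nonneg hinv hanti hzero (ht a List.mem_cons_self) le_sup_right,
      List.toFinset_cons, sup_insert, sup_assoc]

lemma symmaxFold_map_neg_of_nonneg (hinv : Function.Involutive neg) (hanti : Antitone neg)
    (hzero : neg zero = zero) (l : List ι) (t : ι → L) (ht : ∀ i ∈ l, zero ≤ t i) :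
    symmaxFold neg zero (l.map fun i => neg (t i)) = neg (l.toFinset.sup t ⊔ zero) := by
  induction l with
  | nil => simp [symmaxFold, hzero]
  | cons a l ih =>
    have ih := ih fun i hi => ht i (List.mem_cons_of_mem a hi)
    change symmax neg zero (neg (t a)) (symmaxFold neg zero (l.map fun i => neg (t i))) = _
    rw [ih, symmax_of_nonpos hinv hanti hzero ((hanti (ht a List.mem_cons_self)).trans_eq hzero)
      ((hanti le_sup_right).trans_eq hzero), ← hanti.map_sup, List.toFinset_cons, sup_insert,
      sup_assoc]

lemma symmaxFold_map_symmin_of_nonneg (hinv : Function.Involutive neg) (hanti : Antitone neg)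
    (hzero : neg zero = zero) (l : List ι) {x w : ι → L} (hx : ∀ i ∈ l, zero ≤ x i)
    (hw : ∀ i ∈ l, zero ≤ w i) :
    symmaxFold neg zero (l.map fun i => symmin neg zero (x i) (w i)) =
      l.toFinset.sup (fun i => x i ⊓ w i) ⊔ zero := by
  rw [List.map_congr_left fun i hi => symmin_of_nonneg hanti hzero (hx i hi) (hw i hi)]
  exact symmaxFold_map_of_nonneg hinv hanti hzero l _ fun i hi => le_inf (hx i hi) (hw i hi)

lemma symmaxFold_map_symmin_of_neg (hinv : Function.Involutive neg) (hanti : Antitone neg)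
    (hzero : neg zero = zero) (l : List ι) {x w : ι → L} (hx : ∀ i ∈ l, x i < zero)
    (hw : ∀ i ∈ l, zero ≤ w i) :
    symmaxFold neg zero (l.map fun i => symmin neg zero (x i) (w i)) =
      neg (l.toFinset.sup (fun i => neg (x i) ⊓ w i) ⊔ zero) := by
  rw [List.map_congr_left fun i hi => symmin_of_neg_of_nonneg hanti hzero (hx i hi) (hw i hi)]
  exact symmaxFold_map_neg_of_nonneg hinv hanti hzero l _
    fun i hi => le_inf (hzero ▸ hanti (hx i hi).le) (hw i hi)

end Folds

section SortedSugeno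

variable [LinearOrder L] [BoundedOrder L]

lemma sup_inf_inf_eq_sup_Ici_of_monotone {α : Type*} [Fintype α] [LinearOrder α]
    {g : α → L} (hg : Monotone g) {w : Finset α → L} (hw : Monotone w) :
    (univ.sup fun A : Finset α => A.inf g ⊓ w A) =
      (univ.sup fun i => g i ⊓ w (univ.filter fun k => i ≤ k)) ⊔ w ∅ := by
  apply le_antisymm
  · refine Finset.sup_le fun A _ => ?_
    rcases A.eq_empty_or_nonempty with rfl | hA
    · exact inf_le_right.trans le_sup_right
    · have hmin : A ⊆ univ.filter fun k => A.min' hA ≤ k := fun k hk => by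
        simpa using A.min'_le k hk
      calc A.inf g ⊓ w A ≤ g (A.min' hA) ⊓ w (univ.filter fun k => A.min' hA ≤ k) :=
            inf_le_inf (inf_le (A.min'_mem hA)) (hw hmin)
        _ ≤ _ := le_sup_of_le_left
          (le_sup (f := fun i => g i ⊓ w (univ.filter fun k => i ≤ k)) (mem_univ _))
  · refine sup_le (Finset.sup_le fun i _ => ?_) ?_
    · have hgi : g i ≤ (univ.filter fun k => i ≤ k).inf g :=
        Finset.le_inf fun k hk => hg (by simpa using hk)
      exact (inf_le_inf_right _ hgi).trans (le_sup (f := fun A => A.inf g ⊓ w A) (mem_univ _))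
    · simpa using le_sup (f := fun A => A.inf g ⊓ w A) (mem_univ ∅)

variable {n : ℕ}

lemma sugeno_eq_sup_image (v : Finset (Fin n) → L) (g : Fin n → L) (σ : Equiv.Perm (Fin n)) :
    sugeno v g = univ.sup fun B : Finset (Fin n) => B.inf (g ∘ σ) ⊓ v (B.image σ) := by
  have himage : Function.Surjective fun B : Finset (Fin n) => B.image σ :=
    fun B => ⟨B.image σ.symm, by simp [image_image]⟩
  rw [sugeno, powerset_univ]
  conv_lhs => rw [← image_univ_of_surjective himage, sup_image]
  simp only [Function.comp_def, inf_image]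

lemma sugeno_eq_of_monotone (v : Finset (Fin n) → L) (hmono : Monotone v) (g : Fin n → L)
    (σ : Equiv.Perm (Fin n)) (hg : Monotone (g ∘ σ)) :
    sugeno v g =
      (univ.sup fun i => g (σ i) ⊓ v ((univ.filter fun k => i ≤ k).image σ)) ⊔ v ∅ := by
  rw [sugeno_eq_sup_image v g σ]
  exact sup_inf_inf_eq_sup_Ici_of_monotone hg (w := fun B => v (B.image σ))
    fun _ _ h => hmono (image_subset_image h)

lemma sugeno_eq_of_antitone (v : Finset (Fin n) → L) (hmono : Monotone v) (g : Fin n → L)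
    (σ : Equiv.Perm (Fin n)) (hg : Antitone (g ∘ σ)) :
    sugeno v g =
      (univ.sup fun i => g (σ i) ⊓ v ((univ.filter fun k => k ≤ i).image σ)) ⊔ v ∅ := by
  rw [sugeno_eq_sup_image v g σ]
  -- the monotone case on `(Fin n)ᵒᵈ`, whose sets `{k | i ≤ k}` are the lower sets of `Fin n`
  exact sup_inf_inf_eq_sup_Ici_of_monotone (α := (Fin n)ᵒᵈ) (g := g ∘ σ) hg.dual_left
    (w := fun B => v (B.image σ)) fun _ _ h => hmono (image_subset_image h)

end SortedSugeno

lemma sup_sup_eq_filter_sup_sup {ι : Type*} [DecidableEq ι] [SemilatticeSup L] [OrderBot L]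
    (s : Finset ι) (q : ι → Prop) [DecidablePred q] {F G : ι → L} {z : L}
    (hq : ∀ i ∈ s, q i → F i = G i) (hnq : ∀ i ∈ s, ¬ q i → F i ≤ z) :
    s.sup F ⊔ z = (s.filter q).sup G ⊔ z := by
  conv_lhs => rw [← filter_union_filter_not_eq q s]
  rw [sup_union, sup_congr rfl fun i hi => hq i (mem_filter.mp hi).1 (mem_filter.mp hi).2,
    sup_assoc, sup_eq_right.mpr (Finset.sup_le fun i hi =>
      hnq i (mem_filter.mp hi).1 (mem_filter.mp hi).2)]

section Parts

variable [LinearOrder L] [BoundedOrder L] {n : ℕ} {zero : L} {v : Finset (Fin n) → L}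
  {f : Fin n → L} {σ : Equiv.Perm (Fin n)} {p : ℕ}

lemma sugeno_sup_zero_eq (hempty : v ∅ = zero) (hmono : Monotone v) (hσ : Monotone (f ∘ σ))
    (hp : ∀ i : Fin n, f (σ i) < zero ↔ (i : ℕ) < p) :
    sugeno v (fun i => f i ⊔ zero) =
      (univ.filter fun i : Fin n => p ≤ (i : ℕ)).sup
        (fun i => f (σ i) ⊓ v ((univ.filter fun k => i ≤ k).image σ)) ⊔ zero := by
  rw [sugeno_eq_of_monotone v hmono (fun i => f i ⊔ zero) σ
    fun _ _ h => sup_le_sup_right (hσ h) zero, hempty]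
  refine sup_sup_eq_filter_sup_sup _ _ (fun i _ hi => ?_) fun i _ hi => ?_
  · rw [sup_eq_left.mpr (not_lt.mp ((hp i).not.mpr (not_lt.mpr hi)))]
  · rw [sup_eq_right.mpr ((hp i).mpr (not_le.mp hi)).le]
    exact inf_le_left

lemma sugeno_neg_sup_zero_eq {neg : L → L} (hanti : Antitone neg) (hzero : neg zero = zero)
    (hempty : v ∅ = zero) (hmono : Monotone v) (hσ : Monotone (f ∘ σ))
    (hp : ∀ i : Fin n, f (σ i) < zero ↔ (i : ℕ) < p) :
    sugeno v (fun i => neg (f i) ⊔ zero) =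
      (univ.filter fun i : Fin n => (i : ℕ) < p).sup
        (fun i => neg (f (σ i)) ⊓ v ((univ.filter fun k => k ≤ i).image σ)) ⊔ zero := by
  rw [sugeno_eq_of_antitone v hmono (fun i => neg (f i) ⊔ zero) σ
    fun _ _ h => sup_le_sup_right (hanti (hσ h)) zero, hempty]
  refine sup_sup_eq_filter_sup_sup _ _ (fun i _ hi => ?_) fun i _ hi => ?_
  · rw [sup_eq_left.mpr (hzero ▸ hanti ((hp i).mpr hi).le)]
  · rw [sup_eq_right.mpr ((hanti (not_lt.mp ((hp i).not.mpr hi))).trans_eq hzero)]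
    exact inf_le_left

end Parts

theorem symSugeno_explicit_general {n : ℕ} [LinearOrder L] [BoundedOrder L]
    (neg : L → L) (zero : L)
    (hinv : ∀ a, neg (neg a) = a)
    (hanti : ∀ a b : L, a ≤ b → neg b ≤ neg a)
    (hzero : neg zero = zero)
    (v : Finset (Fin n) → L)
    (hempty : v ∅ = zero)
    (hmono : ∀ A B : Finset (Fin n), A ⊆ B → v A ≤ v B)
    (hpos : ∀ A : Finset (Fin n), zero ≤ v A)
    (f : Fin n → L) (σ : Equiv.Perm (Fin n)) (hσ : Monotone (f ∘ σ))
    (p : ℕ) (hp : ∀ i : Fin n, f (σ i) < zero ↔ (i : ℕ) < p) :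
    symSugeno neg zero v f =
      symmax neg zero
        (symmaxFold neg zero
          (((List.finRange n).filter fun i : Fin n => decide ((i : ℕ) < p)).map fun i =>
            symmin neg zero (f (σ i))
              (v ((Finset.univ.filter fun k : Fin n => k ≤ i).image σ))))
        (symmaxFold neg zero
          (((List.finRange n).filter fun i : Fin n => decide (p ≤ (i : ℕ))).map fun i =>
            symmin neg zero (f (σ i))
              (v ((Finset.univ.filter fun k : Fin n => i ≤ k).image σ)))) := by
  rw [symSugeno, sugeno_sup_zero_eq hempty hmono hσ hp,
    sugeno_neg_sup_zero_eq hanti hzero hempty hmono hσ hp,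
    symmaxFold_map_symmin_of_neg hinv hanti hzero _
      (fun i hi => (hp i).mpr (by simpa using hi)) fun i _ => hpos _,
    symmaxFold_map_symmin_of_nonneg hinv hanti hzero _
      (fun i hi => not_lt.mp ((hp i).not.mpr (by simpa using hi))) fun i _ => hpos _,
    symmax_comm hinv]
  congr <;> ext <;> simp

/-- explicit form of the symmetric Sugeno integral, where f is
sorted increasingly along σ and its first p values are negative:
Š_v(f) = [⊻_{i≤p} (f_{(i)} ⊼ v({(1),…,(i)}))] ⊻ [⊻_{i>p} (f_{(i)} ⊼ v({(i),…,(n)}))]. -/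
theorem symSugeno_explicit {n : ℕ} [LinearOrder L] [BoundedOrder L]
    (neg : L → L) (zero : L)
    (hinv : ∀ a, neg (neg a) = a)
    (hanti : ∀ a b : L, a ≤ b → neg b ≤ neg a)
    (hzero : neg zero = zero)
    (v : Finset (Fin n) → L)
    (hempty : v ∅ = zero) (hfull : v Finset.univ = ⊤)
    (hmono : ∀ A B : Finset (Fin n), A ⊆ B → v A ≤ v B)
    (hpos : ∀ A : Finset (Fin n), zero ≤ v A)
    (f : Fin n → L) (σ : Equiv.Perm (Fin n)) (hσ : Monotone (f ∘ σ))
    (p : ℕ) (hp : ∀ i : Fin n, f (σ i) < zero ↔ (i : ℕ) < p) :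
    symSugeno neg zero v f =
      symmax neg zero
        (symmaxFold neg zero
          (((List.finRange n).filter fun i : Fin n => decide ((i : ℕ) < p)).map fun i =>
            symmin neg zero (f (σ i))
              (v ((Finset.univ.filter fun k : Fin n => k ≤ i).image σ))))
        (symmaxFold neg zero
          (((List.finRange n).filter fun i : Fin n => decide (p ≤ (i : ℕ))).map fun i =>
            symmin neg zero (f (σ i))
              (v ((Finset.univ.filter fun k : Fin n => i ≤ k).image σ)))) :=
  symSugeno_explicit_general neg zero hinv hanti hzero v hempty hmono hpos f σ hσ p hp
end
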